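/- For every k ≥ 1 the PMM iterates satisfy Σ_{j=1}^{k} ρ_j(2−ρ_j)γ_j² ‖(Mu_j+Cv_j−d, x_j−y_j)‖² ≤ d_0², where x_j−y_j = λ(w_{j-1}−Mu_j) and d_0 is the distance from (z_0,w_0) to the extended solution set S_e. -/

import Mathlib

open scoped RealInnerProductSpace

noncomputable section

/-- `w` is a subgradient of the extended-real-valued function `φ` at `x`. -/
def HasSubgrad {E : Type*} [NormedAddCommGroup E] [InnerProductSpace ℝ E]
    (φ : E → EReal) (w x : E) : Prop :=
  ∀ x' : E, φ x + ((⟪w, x' - x⟫ : ℝ) : EReal) ≤ φ x'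

/-- `w` is an `ε`-subgradient of `φ` at `x`. -/
def HasESubgrad {E : Type*} [NormedAddCommGroup E] [InnerProductSpace ℝ E]
    (φ : E → EReal) (ε : ℝ) (w x : E) : Prop :=
  ∀ x' : E, φ x + ((⟪w, x' - x⟫ : ℝ) : EReal) - (ε : EReal) ≤ φ x'

/-- Convexity for an extended-real-valued function. -/
def ConvexE {E : Type*} [NormedAddCommGroup E] [InnerProductSpace ℝ E]
    (φ : E → EReal) : Prop :=
  ∀ x y : E, ∀ a b : ℝ, 0 ≤ a → 0 ≤ b → a + b = 1 →
    φ (a • x + b • y) ≤ (a : EReal) * φ x + (b : EReal) * φ y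

/-- Proper closed convex function with values in `(-∞, ∞]`. -/
def IsPCC {E : Type*} [NormedAddCommGroup E] [InnerProductSpace ℝ E]
    (φ : E → EReal) : Prop :=
  (∀ x, φ x ≠ ⊥) ∧ (∃ x, φ x ≠ ⊤) ∧ LowerSemicontinuous φ ∧ ConvexE φ

/-- Fenchel conjugate. -/
def fconj {E : Type*} [NormedAddCommGroup E] [InnerProductSpace ℝ E]
    (φ : E → EReal) (w : E) : EReal :=
  ⨆ x : E, ((⟪w, x⟫ : ℝ) : EReal) - φ x

/-- Lagrangian of `min { f u + g v : M u + C v = d }`. -/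
def Lag {E₁ E₂ F : Type*} [NormedAddCommGroup E₁] [InnerProductSpace ℝ E₁]
    [NormedAddCommGroup E₂] [InnerProductSpace ℝ E₂]
    [NormedAddCommGroup F] [InnerProductSpace ℝ F]
    (f : E₁ → EReal) (g : E₂ → EReal) (M : E₁ →ₗ[ℝ] F) (C : E₂ →ₗ[ℝ] F) (d : F)
    (u : E₁) (v : E₂) (z : F) : EReal :=
  f u + g v + ((⟪M u + C v - d, z⟫ : ℝ) : EReal)

/-- Saddle point of the Lagrangian. -/
def IsSaddle {E₁ E₂ F : Type*} [NormedAddCommGroup E₁] [InnerProductSpace ℝ E₁]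
    [NormedAddCommGroup E₂] [InnerProductSpace ℝ E₂]
    [NormedAddCommGroup F] [InnerProductSpace ℝ F]
    (f : E₁ → EReal) (g : E₂ → EReal) (M : E₁ →ₗ[ℝ] F) (C : E₂ →ₗ[ℝ] F) (d : F)
    (us : E₁) (vs : E₂) (zs : F) : Prop :=
  Lag f g M C d us vs zs ≠ ⊤ ∧ Lag f g M C d us vs zs ≠ ⊥ ∧
  (∀ u v, Lag f g M C d us vs zs ≤ Lag f g M C d u v zs) ∧
  (∀ ζ, Lag f g M C d us vs ζ ≤ Lag f g M C d us vs zs)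

/-- `h₁(z) = f*(-M* z)`. -/
def hOne {E₁ F : Type*} [NormedAddCommGroup E₁] [InnerProductSpace ℝ E₁]
    [FiniteDimensional ℝ E₁] [NormedAddCommGroup F] [InnerProductSpace ℝ F]
    [FiniteDimensional ℝ F] (f : E₁ → EReal) (M : E₁ →ₗ[ℝ] F) (z : F) : EReal :=
  fconj f (-(LinearMap.adjoint M z))

/-- `h₂(z) = g*(-C* z) + ⟪d, z⟫`. -/
def hTwo {E₂ F : Type*} [NormedAddCommGroup E₂] [InnerProductSpace ℝ E₂]
    [FiniteDimensional ℝ E₂] [NormedAddCommGroup F] [InnerProductSpace ℝ F]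
    [FiniteDimensional ℝ F] (g : E₂ → EReal) (C : E₂ →ₗ[ℝ] F) (d : F) (z : F) : EReal :=
  fconj g (-(LinearMap.adjoint C z)) + ((⟪d, z⟫ : ℝ) : EReal)

/-- The extended solution set `S_e(∂h₁, ∂h₂)`. -/
def extSolSet {E₁ E₂ F : Type*} [NormedAddCommGroup E₁] [InnerProductSpace ℝ E₁]
    [FiniteDimensional ℝ E₁] [NormedAddCommGroup E₂] [InnerProductSpace ℝ E₂]
    [FiniteDimensional ℝ E₂] [NormedAddCommGroup F] [InnerProductSpace ℝ F]
    [FiniteDimensional ℝ F]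
    (f : E₁ → EReal) (g : E₂ → EReal) (M : E₁ →ₗ[ℝ] F) (C : E₂ →ₗ[ℝ] F) (d : F) :
    Set (F × F) :=
  {p | HasSubgrad (hOne f M) (-p.2) p.1 ∧ HasSubgrad (hTwo g C d) p.2 p.1}

/-!
Each PMM iteration is a relaxed projection step of projective splitting for
`0 ∈ ∂h₁(z) + ∂h₂(z)`. Through Fenchel duality the optimality conditions of the two subproblems
read `d - C vₖ ∈ ∂h₂(xₖ)` and `-M uₖ ∈ ∂h₁(yₖ)`. By monotonicity of subdifferentials the affine
function `φₖ(z, w) = ⟪z - xₖ, d - C vₖ - w⟫ + ⟪z - yₖ, w - M uₖ⟫` is nonpositive on `S_e`, while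
`φₖ(zₖ₋₁, wₖ₋₁)` is the numerator of `γₖ`, so `(zₖ, wₖ)` is the `ρₖ`-relaxed projection of
`(zₖ₋₁, wₖ₋₁)` onto `{φₖ ≤ 0}`. Hence the squared distance to any point of `S_e` drops by
`ρₖ(2 - ρₖ)γₖ²‖∇φₖ‖²` at each step; summing, and using that a saddle point of the Lagrangian yields
a point of `S_e`, bounds the sum by `d₀²`.
-/

theorem le_of_forall_le_add_mul {a b c : ℝ} (h : ∀ t ∈ Set.Ioc (0 : ℝ) 1, a ≤ b + t * c) :
    a ≤ b := by
  have hlim : Filter.Tendsto (fun t : ℝ => b + t * c) (nhdsWithin 0 (Set.Ioi 0)) (nhds b) := by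
    have : Continuous fun t : ℝ => b + t * c := by fun_prop
    simpa using (this.tendsto 0).mono_left nhdsWithin_le_nhds
  exact ge_of_tendsto hlim (Filter.eventually_of_mem (Ioc_mem_nhdsGT one_pos) h)

theorem sum_Icc_le_of_forall_succ_add_le {a D : ℕ → ℝ} (hD : ∀ j, 0 ≤ D j)
    (h : ∀ j, D (j + 1) + a (j + 1) ≤ D j) (k : ℕ) : ∑ j ∈ Finset.Icc 1 k, a j ≤ D 0 := by
  have key : ∀ k, ∑ j ∈ Finset.Icc 1 k, a j + D k ≤ D 0 := by
    intro k
    induction k with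
    | zero => simp
    | succ k ih =>
      rw [Finset.sum_Icc_succ_top (by omega)]
      linarith [h k]
  linarith [key k, hD k]

theorem le_sInf_sqrt_image_sq {α : Type*} {S : Set α} {D : α → ℝ} {s : ℝ} (hS : S.Nonempty)
    (h : ∀ p ∈ S, s ≤ D p) : s ≤ sInf ((fun p => √(D p)) '' S) ^ 2 := by
  rcases le_or_gt s 0 with hs | hs
  · exact hs.trans (sq_nonneg _)
  have hsqrt : √s ≤ sInf ((fun p => √(D p)) '' S) :=
    le_csInf (hS.image _) (Set.forall_mem_image.2 fun p hp => Real.sqrt_le_sqrt (h p hp))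
  calc s = √s ^ 2 := (Real.sq_sqrt hs.le).symm
    _ ≤ _ := pow_le_pow_left₀ (Real.sqrt_nonneg s) hsqrt 2

section Subgradient

variable {E F : Type*} [NormedAddCommGroup E] [InnerProductSpace ℝ E]
  [NormedAddCommGroup F] [InnerProductSpace ℝ F]

theorem HasSubgrad.inner_sub_nonneg {φ : E → EReal} {w₁ w₂ x₁ x₂ : E} {r : ℝ}
    (hr : φ x₁ = r) (h₁ : HasSubgrad φ w₁ x₁) (h₂ : HasSubgrad φ w₂ x₂) :
    0 ≤ ⟪w₁ - w₂, x₁ - x₂⟫ := by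
  have h₁₂ := h₁ x₂
  have h₂₁ := h₂ x₁
  rw [hr] at h₁₂ h₂₁
  induction hx₂ : φ x₂ using EReal.rec with
  | bot => rw [hx₂] at h₁₂; exact absurd h₁₂ (by simp [← EReal.coe_add])
  | top => rw [hx₂] at h₂₁; exact absurd h₂₁ (by simp)
  | coe s =>
    rw [hx₂] at h₁₂ h₂₁
    norm_cast at h₁₂ h₂₁
    have : ⟪w₁ - w₂, x₁ - x₂⟫ = -⟪w₁, x₂ - x₁⟫ - ⟪w₂, x₁ - x₂⟫ := by
      simp only [inner_sub_left, inner_sub_right]; ring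
    linarith

theorem hasSubgrad_of_forall_add_coe_le {φ : E → EReal} {q : E → ℝ} {w x₀ : E}
    (hq : ∀ x, q x = q x₀ - ⟪w, x - x₀⟫) (hmin : ∀ x, φ x₀ + q x₀ ≤ φ x + q x) :
    HasSubgrad φ w x₀ := by
  intro x
  have h := hmin x
  rw [hq x] at h
  rwa [← (EReal.addLECancellable_coe _).add_le_add_iff_right, add_assoc, ← EReal.coe_add,
    add_sub_cancel]

theorem exists_eq_coe_of_forall_add_coe_le {α : Type*} {φ : α → EReal} {q : α → ℝ} {x₀ : α}
    (hbot : ∀ x, φ x ≠ ⊥) (htop : ∃ x, φ x ≠ ⊤) (hmin : ∀ x, φ x₀ + q x₀ ≤ φ x + q x) :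
    ∃ r : ℝ, φ x₀ = r := by
  obtain ⟨x, hx⟩ := htop
  have hx₀ : φ x₀ ≠ ⊤ := fun h => by
    have := hmin x
    rw [h, EReal.top_add_coe, top_le_iff] at this
    exact EReal.add_ne_top hx (EReal.coe_ne_top _) this
  exact ⟨_, (EReal.coe_toReal hx₀ (hbot x₀)).symm⟩

theorem ConvexE.le_coe {φ : E → EReal} (hφ : ConvexE φ) {x y : E} {a b t : ℝ}
    (hx : φ x = a) (hy : φ y = b) (ht₀ : 0 ≤ t) (ht₁ : t ≤ 1) :
    φ ((1 - t) • x + t • y) ≤ ((1 - t) * a + t * b : ℝ) := by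
  have := hφ x y (1 - t) t (by linarith) ht₀ (by ring)
  rwa [hx, hy] at this

end Subgradient

section Conjugate

variable {E : Type*} [NormedAddCommGroup E] [InnerProductSpace ℝ E]

theorem le_fconj (φ : E → EReal) (y x : E) : ((⟪y, x⟫ : ℝ) : EReal) - φ x ≤ fconj φ y :=
  le_iSup (fun x => ((⟪y, x⟫ : ℝ) : EReal) - φ x) x

theorem fconj_eq_of_hasSubgrad {φ : E → EReal} {y x : E} {r : ℝ} (hr : φ x = r)
    (h : HasSubgrad φ y x) : fconj φ y = ((⟪y, x⟫ - r : ℝ) : EReal) := by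
  refine le_antisymm (iSup_le fun x' => ?_) (by simpa [hr] using le_fconj φ y x)
  have h' := h x'
  rw [hr] at h'
  induction hx' : φ x' using EReal.rec with
  | bot => rw [hx'] at h'; exact absurd h' (by simp [← EReal.coe_add])
  | top => simp
  | coe s =>
    rw [hx'] at h'
    norm_cast at h' ⊢
    rw [inner_sub_right] at h'
    linarith

theorem HasSubgrad.hasSubgrad_fconj {φ : E → EReal} {y x : E} {r : ℝ} (hr : φ x = r)
    (h : HasSubgrad φ y x) : HasSubgrad (fconj φ) x y := by
  intro y'
  rw [fconj_eq_of_hasSubgrad hr h]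
  calc ((⟪y, x⟫ - r : ℝ) : EReal) + ((⟪x, y' - y⟫ : ℝ) : EReal)
      = ((⟪y', x⟫ : ℝ) : EReal) - φ x := by
        rw [hr, ← EReal.coe_add, ← EReal.coe_sub, inner_sub_right, real_inner_comm x,
          real_inner_comm x]
        ring_nf
    _ ≤ fconj φ y' := le_fconj φ y' x

theorem HasSubgrad.add_inner {φ : E → EReal} {w x : E} (h : HasSubgrad φ w x) (d : E) :
    HasSubgrad (fun z => φ z + ((⟪d, z⟫ : ℝ) : EReal)) (w + d) x := by
  intro x'
  calc φ x + ((⟪d, x⟫ : ℝ) : EReal) + ((⟪w + d, x' - x⟫ : ℝ) : EReal)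
      = φ x + ((⟪w, x' - x⟫ : ℝ) : EReal) + ((⟪d, x'⟫ : ℝ) : EReal) := by
        rw [add_assoc, add_assoc, ← EReal.coe_add, ← EReal.coe_add, inner_add_left,
          inner_sub_right d]
        ring_nf
    _ ≤ φ x' + ((⟪d, x'⟫ : ℝ) : EReal) := by gcongr; exact h x'

end Conjugate

section Dual

variable {E F : Type*} [NormedAddCommGroup E] [InnerProductSpace ℝ E] [FiniteDimensional ℝ E]
  [NormedAddCommGroup F] [InnerProductSpace ℝ F] [FiniteDimensional ℝ F]

theorem ConvexE.hasSubgrad_of_forall_add_quadratic_le {g : E → EReal} (hg : ConvexE g)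
    (hbot : ∀ v, g v ≠ ⊥) {A : E →ₗ[ℝ] F} {c p : F} {lam G : ℝ} {v₀ : E} (hv₀ : g v₀ = G)
    (hmin : ∀ v, g v₀ + ((⟪p, A v₀ - c⟫ + lam / 2 * ‖A v₀ - c‖ ^ 2 : ℝ) : EReal) ≤
      g v + ((⟪p, A v - c⟫ + lam / 2 * ‖A v - c‖ ^ 2 : ℝ) : EReal)) :
    HasSubgrad g (-(A.adjoint (p + lam • (A v₀ - c)))) v₀ := by
  intro v
  rw [hv₀]
  induction hv : g v using EReal.rec with
  | bot => exact absurd hv (hbot v)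
  | top => exact le_top
  | coe G' =>
    set a := A v₀ - c
    set h := A v - A v₀
    have hinner : ⟪-(A.adjoint (p + lam • a)), v - v₀⟫ = -(⟪p, h⟫ + lam * ⟪a, h⟫) := by
      rw [inner_neg_left, LinearMap.adjoint_inner_left, map_sub, inner_add_left,
        real_inner_smul_left]
    rw [hinner]
    norm_cast
    -- compare `v₀` with `(1 - t) • v₀ + t • v`, divide by `t` and let `t → 0`
    refine le_of_forall_le_add_mul (c := lam / 2 * ‖h‖ ^ 2) fun t ⟨ht₀, ht₁⟩ => ?_
    have hmin_t := (hmin _).trans (add_le_add_left (hg.le_coe hv₀ hv ht₀.le ht₁) _)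
    rw [hv₀] at hmin_t
    norm_cast at hmin_t
    have hseg : A ((1 - t) • v₀ + t • v) - c = a + t • h := by
      simp only [map_add, map_smul, a, h]; module
    rw [hseg, inner_add_right, real_inner_smul_right, norm_add_sq_real, real_inner_smul_right,
      norm_smul, Real.norm_of_nonneg ht₀.le] at hmin_t
    refine le_of_mul_le_mul_left ?_ ht₀
    linear_combination hmin_t

theorem HasSubgrad.comp_neg_adjoint {φ : E → EReal} {A : E →ₗ[ℝ] F} {v : E} {z : F}
    (h : HasSubgrad φ v (-(A.adjoint z))) :
    HasSubgrad (fun z => φ (-(A.adjoint z))) (-(A v)) z := by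
  intro z'
  have hinner : ⟪-(A v), z' - z⟫ = ⟪v, -(A.adjoint z') - -(A.adjoint z)⟫ := by
    rw [neg_sub_neg, ← map_sub, LinearMap.adjoint_inner_right, inner_neg_left,
      ← inner_neg_right, neg_sub]
  simpa only [hinner] using h (-(A.adjoint z'))

theorem HasSubgrad.hasSubgrad_hTwo {g : E → EReal} {A : E →ₗ[ℝ] F} {v : E} {x : F} {r : ℝ}
    (hr : g v = r) (h : HasSubgrad g (-(A.adjoint x)) v) (c : F) :
    HasSubgrad (hTwo g A c) (c - A v) x := by
  rw [sub_eq_neg_add]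
  exact (h.hasSubgrad_fconj hr).comp_neg_adjoint.add_inner c

theorem hTwo_eq_coe_of_hasSubgrad {g : E → EReal} {A : E →ₗ[ℝ] F} {v : E} {x : F} {r : ℝ}
    (hr : g v = r) (h : HasSubgrad g (-(A.adjoint x)) v) (c : F) :
    hTwo g A c x = ((⟪-(A.adjoint x), v⟫ - r + ⟪c, x⟫ : ℝ) : EReal) := by
  rw [hTwo, fconj_eq_of_hasSubgrad hr h, EReal.coe_add]

theorem hOne_eq_hTwo_zero (f : E → EReal) (M : E →ₗ[ℝ] F) : hOne f M = hTwo f M 0 := by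
  funext z
  simp [hOne, hTwo]

theorem ConvexE.hasSubgrad_hTwo_of_forall_add_quadratic_le {g : E → EReal} (hg : ConvexE g)
    (hbot : ∀ v, g v ≠ ⊥) (htop : ∃ v, g v ≠ ⊤) {A : E →ₗ[ℝ] F} {c p : F} {lam : ℝ} {v₀ : E}
    (hmin : ∀ v, g v₀ + ((⟪p, A v₀ - c⟫ + lam / 2 * ‖A v₀ - c‖ ^ 2 : ℝ) : EReal) ≤
      g v + ((⟪p, A v - c⟫ + lam / 2 * ‖A v - c‖ ^ 2 : ℝ) : EReal)) :
    (∃ r : ℝ, hTwo g A c (p + lam • (A v₀ - c)) = r) ∧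
      HasSubgrad (hTwo g A c) (c - A v₀) (p + lam • (A v₀ - c)) := by
  obtain ⟨G, hG⟩ := exists_eq_coe_of_forall_add_coe_le (x₀ := v₀)
    (q := fun v => ⟪p, A v - c⟫ + lam / 2 * ‖A v - c‖ ^ 2) hbot htop hmin
  have h := hg.hasSubgrad_of_forall_add_quadratic_le hbot hG hmin
  exact ⟨⟨_, hTwo_eq_coe_of_hasSubgrad hG h c⟩, h.hasSubgrad_hTwo hG c⟩

end Dual

section Fejer

variable {F : Type*} [NormedAddCommGroup F] [InnerProductSpace ℝ F]

/-- The projective-splitting separator `(z, w) ↦ ⟪z - x, a - w⟫ + ⟪z - y, b + w⟫` is affine with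
gradient `(a + b, x - y)` and, by monotonicity of `∂φ₁` and `∂φ₂`, nonpositive at `(zs, ws)`. -/
theorem separator_le_inner_of_hasSubgrad {φ₁ φ₂ : F → EReal} {x y a b zs ws : F} {r s : ℝ}
    (hx : φ₂ x = r) (ha : HasSubgrad φ₂ a x) (hy : φ₁ y = s) (hb : HasSubgrad φ₁ b y)
    (hzs₁ : HasSubgrad φ₁ (-ws) zs) (hzs₂ : HasSubgrad φ₂ ws zs) (z w : F) :
    ⟪z - x, a - w⟫ + ⟪z - y, b + w⟫ ≤ ⟪a + b, z - zs⟫ + ⟪x - y, w - ws⟫ := by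
  have hxa := ha.inner_sub_nonneg hx hzs₂
  have hyb := hb.inner_sub_nonneg hy hzs₁
  rw [sub_neg_eq_add] at hyb
  have hgap : ⟪a + b, z - zs⟫ + ⟪x - y, w - ws⟫ - (⟪z - x, a - w⟫ + ⟪z - y, b + w⟫) =
      ⟪a - ws, x - zs⟫ + ⟪b + ws, y - zs⟫ := by
    simp only [inner_sub_left, inner_sub_right, inner_add_left, inner_add_right, real_inner_comm]
    ring
  linarith

/-- `(z, w) ↦ (z, w) - ργ (gz, gw)` is the `ρ`-relaxed projection onto a halfspace with normal
`(gz, gw)` containing `(zs, ws)`. If the normal vanishes then `γ = 0` by the convention `x / 0 = 0`,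
and the step does nothing. -/
theorem norm_sq_add_le_of_relaxed_projection {z w zs ws gz gw : F} {φ γ ρ : ℝ} (hφ : 0 ≤ φ)
    (hsep : φ ≤ ⟪gz, z - zs⟫ + ⟪gw, w - ws⟫) (hγ : γ = φ / (‖gz‖ ^ 2 + ‖gw‖ ^ 2))
    (hρ : 0 ≤ ρ) :
    ‖z - (ρ * γ) • gz - zs‖ ^ 2 + ‖w - (ρ * γ) • gw - ws‖ ^ 2 +
        ρ * (2 - ρ) * γ ^ 2 * (‖gz‖ ^ 2 + ‖gw‖ ^ 2) ≤ ‖z - zs‖ ^ 2 + ‖w - ws‖ ^ 2 := by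
  have hN : 0 ≤ ‖gz‖ ^ 2 + ‖gw‖ ^ 2 := by positivity
  have hγ₀ : 0 ≤ γ := hγ ▸ div_nonneg hφ hN
  have hγN : γ * (‖gz‖ ^ 2 + ‖gw‖ ^ 2) ≤ φ := by
    rcases hN.eq_or_lt with hN | hN
    · simp [← hN, hφ]
    · rw [hγ, div_mul_cancel₀ _ hN.ne']
  have expand (a g : F) (t : ℝ) :
      ‖a - t • g‖ ^ 2 = ‖a‖ ^ 2 - 2 * t * ⟪g, a⟫ + t ^ 2 * ‖g‖ ^ 2 := by
    rw [norm_sub_sq_real, real_inner_smul_right, norm_smul, Real.norm_eq_abs, mul_pow, sq_abs,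
      real_inner_comm]
    ring
  rw [sub_right_comm z, sub_right_comm w, expand, expand]
  linear_combination 2 * mul_nonneg (mul_nonneg hρ hγ₀) (sub_nonneg.2 (hγN.trans hsep))

end Fejer

section PMM

variable {E₁ E₂ F : Type*} [NormedAddCommGroup E₁] [InnerProductSpace ℝ E₁]
  [NormedAddCommGroup E₂] [InnerProductSpace ℝ E₂] [NormedAddCommGroup F] [InnerProductSpace ℝ F]
  {f : E₁ → EReal} {g : E₂ → EReal} {M : E₁ →ₗ[ℝ] F} {C : E₂ →ₗ[ℝ] F} {d : F}

variable {us : E₁} {vs : E₂} {zs : F}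

theorem IsSaddle.exists_eq_coe (hfbot : ∀ u, f u ≠ ⊥) (hgbot : ∀ v, g v ≠ ⊥)
    (h : IsSaddle f g M C d us vs zs) : (∃ r : ℝ, f us = r) ∧ ∃ r : ℝ, g vs = r := by
  have hftop : f us ≠ ⊤ := fun hf => h.1 <| by
    rw [Lag, hf, EReal.top_add_of_ne_bot (hgbot vs), EReal.top_add_coe]
  have hgtop : g vs ≠ ⊤ := fun hg => h.1 <| by
    rw [Lag, hg, EReal.add_top_of_ne_bot (hfbot us), EReal.top_add_coe]
  exact ⟨⟨_, (EReal.coe_toReal hftop (hfbot us)).symm⟩,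
    ⟨_, (EReal.coe_toReal hgtop (hgbot vs)).symm⟩⟩

theorem IsSaddle.add_eq {Fs Gs : ℝ} (hF : f us = Fs) (hG : g vs = Gs)
    (h : IsSaddle f g M C d us vs zs) : M us + C vs = d := by
  have hmax := h.2.2.2 (zs + (M us + C vs - d))
  simp only [Lag, hF, hG] at hmax
  norm_cast at hmax
  rw [inner_add_right, real_inner_self_eq_norm_sq] at hmax
  have hres : M us + C vs - d = 0 :=
    norm_eq_zero.1 <| (pow_eq_zero_iff two_ne_zero).1 <| le_antisymm (by linarith) (sq_nonneg _)
  exact sub_eq_zero.1 hres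

variable [FiniteDimensional ℝ E₁] [FiniteDimensional ℝ E₂] [FiniteDimensional ℝ F]

theorem IsSaddle.mk_mem_extSolSet (hfbot : ∀ u, f u ≠ ⊥) (hgbot : ∀ v, g v ≠ ⊥)
    (h : IsSaddle f g M C d us vs zs) : (zs, d - C vs) ∈ extSolSet f g M C d := by
  obtain ⟨⟨Fs, hF⟩, ⟨Gs, hG⟩⟩ := h.exists_eq_coe hfbot hgbot
  have hsubf : HasSubgrad f (-(M.adjoint zs)) us := by
    refine hasSubgrad_of_forall_add_coe_le (q := fun u => Gs + ⟪M u + C vs - d, zs⟫)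
      (fun u => ?_) (fun u => ?_)
    · simp only [inner_neg_left, sub_neg_eq_add, LinearMap.adjoint_inner_left, inner_sub_right,
        inner_add_right, real_inner_comm zs]
      ring
    · have := h.2.2.1 u vs
      rwa [Lag, Lag, hG, add_assoc, add_assoc, ← EReal.coe_add, ← EReal.coe_add] at this
  have hsubg : HasSubgrad g (-(C.adjoint zs)) vs := by
    refine hasSubgrad_of_forall_add_coe_le (q := fun v => Fs + ⟪M us + C v - d, zs⟫)
      (fun v => ?_) (fun v => ?_)
    · simp only [inner_neg_left, sub_neg_eq_add, LinearMap.adjoint_inner_left, inner_sub_right,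
        inner_add_right, real_inner_comm zs]
      ring
    · have := h.2.2.1 us v
      rwa [Lag, Lag, hF, add_comm (Fs : EReal), add_comm (Fs : EReal), add_assoc, add_assoc,
        ← EReal.coe_add, ← EReal.coe_add] at this
  refine ⟨?_, hsubg.hasSubgrad_hTwo hG d⟩
  rw [hOne_eq_hTwo_zero, ← eq_sub_of_add_eq (h.add_eq hF hG), ← zero_sub]
  exact hsubf.hasSubgrad_hTwo hF 0

variable {lam : ℝ} {u : E₁} {v : E₂} {z w x y : F}

/-- The `u`- and `v`-subproblems give `d - C v ∈ ∂h₂(x)` and `-M u ∈ ∂h₁(y)`; the left-hand side is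
the separator of `separator_le_inner_of_hasSubgrad` evaluated at the previous iterate `(z, w)`. -/
theorem pmm_separator_le (hfc : ConvexE f) (hfbot : ∀ u, f u ≠ ⊥) (hftop : ∃ u, f u ≠ ⊤)
    (hgc : ConvexE g) (hgbot : ∀ v, g v ≠ ⊥) (hgtop : ∃ v, g v ≠ ⊤) {p : F × F}
    (hp : p ∈ extSolSet f g M C d)
    (hv : ∀ v' : E₂, g v + ((⟪z + lam • w, C v - d⟫ + lam / 2 * ‖C v - d‖ ^ 2 : ℝ) : EReal) ≤
      g v' + ((⟪z + lam • w, C v' - d⟫ + lam / 2 * ‖C v' - d‖ ^ 2 : ℝ) : EReal))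
    (hu : ∀ u' : E₁, f u + ((⟪z + lam • (C v - d), M u⟫ + lam / 2 * ‖M u‖ ^ 2 : ℝ) : EReal) ≤
      f u' + ((⟪z + lam • (C v - d), M u'⟫ + lam / 2 * ‖M u'‖ ^ 2 : ℝ) : EReal))
    (hx : x = z + lam • w + lam • (C v - d)) (hy : y = x - lam • (w - M u)) :
    lam * ‖C v - d + w‖ ^ 2 + lam * ⟪d - C v - M u, w - M u⟫ ≤
      ⟪d - C v - M u, z - p.1⟫ + ⟪x - y, w - p.2⟫ := by
  obtain ⟨⟨r, hr⟩, ha⟩ := hgc.hasSubgrad_hTwo_of_forall_add_quadratic_le hgbot hgtop hv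
  rw [← hx] at hr ha
  obtain ⟨⟨s, hs⟩, hb⟩ := hfc.hasSubgrad_hTwo_of_forall_add_quadratic_le (c := 0)
    (p := z + lam • (C v - d)) hfbot hftop (by simpa only [sub_zero] using hu)
  have hy' : z + lam • (C v - d) + lam • (M u - 0) = y := by rw [hy, hx]; module
  rw [hy', ← hOne_eq_hTwo_zero] at hs hb
  rw [zero_sub] at hb
  have hsep := separator_le_inner_of_hasSubgrad hr ha hs hb hp.1 hp.2 z w
  have hzx : z - x = (-lam) • (C v - d + w) := by rw [hx]; module
  have hzy : z - y = lam • (d - C v - M u) := by rw [hy, hx]; module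
  rw [← sub_eq_add_neg, neg_add_eq_sub, hzx, hzy, show d - C v - w = -(C v - d + w) by abel,
    real_inner_smul_left, real_inner_smul_left, inner_neg_right, real_inner_self_eq_norm_sq]
    at hsep
  linarith

theorem pmm_fejer_step (hfc : ConvexE f) (hfbot : ∀ u, f u ≠ ⊥) (hftop : ∃ u, f u ≠ ⊤)
    (hgc : ConvexE g) (hgbot : ∀ v, g v ≠ ⊥) (hgtop : ∃ v, g v ≠ ⊤) {γ ρ : ℝ}
    (hlam : 0 ≤ lam) (hρ : 0 ≤ ρ) {p : F × F} (hp : p ∈ extSolSet f g M C d)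
    (hv : ∀ v' : E₂, g v + ((⟪z + lam • w, C v - d⟫ + lam / 2 * ‖C v - d‖ ^ 2 : ℝ) : EReal) ≤
      g v' + ((⟪z + lam • w, C v' - d⟫ + lam / 2 * ‖C v' - d‖ ^ 2 : ℝ) : EReal))
    (hu : ∀ u' : E₁, f u + ((⟪z + lam • (C v - d), M u⟫ + lam / 2 * ‖M u‖ ^ 2 : ℝ) : EReal) ≤
      f u' + ((⟪z + lam • (C v - d), M u'⟫ + lam / 2 * ‖M u'‖ ^ 2 : ℝ) : EReal))
    (hx : x = z + lam • w + lam • (C v - d)) (hy : y = x - lam • (w - M u))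
    (hγ : γ = (lam * ‖C v - d + w‖ ^ 2 + lam * ⟪d - C v - M u, w - M u⟫) /
      (‖M u + C v - d‖ ^ 2 + lam ^ 2 * ‖M u - w‖ ^ 2)) :
    ‖z + (ρ * γ) • (M u + C v - d) - p.1‖ ^ 2 + ‖w - (ρ * γ * lam) • (w - M u) - p.2‖ ^ 2 +
        ρ * (2 - ρ) * γ ^ 2 * (‖M u + C v - d‖ ^ 2 + ‖x - y‖ ^ 2) ≤
      ‖z - p.1‖ ^ 2 + ‖w - p.2‖ ^ 2 := by
  have hsep := pmm_separator_le hfc hfbot hftop hgc hgbot hgtop hp hv hu hx hy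
  have hsep₀ : 0 ≤ lam * ‖C v - d + w‖ ^ 2 + lam * ⟪d - C v - M u, w - M u⟫ := by
    have hinner : ⟪d - C v - M u, w - M u⟫ = ‖w - M u‖ ^ 2 - ⟪C v - d + w, w - M u⟫ := by
      rw [show d - C v - M u = (w - M u) - (C v - d + w) by abel, inner_sub_left,
        real_inner_self_eq_norm_sq]
    rw [← mul_add, hinner]
    refine mul_nonneg hlam ?_
    linarith [norm_sub_sq_real (C v - d + w) (w - M u), sq_nonneg ‖C v - d + w - (w - M u)‖,
      sq_nonneg ‖C v - d + w‖, sq_nonneg ‖w - M u‖]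
  have hxy : x - y = lam • (w - M u) := by rw [hy]; abel
  have hgz : ‖d - C v - M u‖ = ‖M u + C v - d‖ := by
    rw [← norm_neg]; congr 1; abel
  have hgw : ‖x - y‖ ^ 2 = lam ^ 2 * ‖M u - w‖ ^ 2 := by
    rw [hxy, norm_smul, mul_pow, Real.norm_eq_abs, sq_abs, norm_sub_rev]
  have key := norm_sq_add_le_of_relaxed_projection (γ := γ) hsep₀ hsep
    (by rw [hγ, hgz, hgw]) hρ
  rwa [hgz, hxy, smul_smul, show z - (ρ * γ) • (d - C v - M u) =
    z + (ρ * γ) • (M u + C v - d) by module, ← hxy] at key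

end PMM

theorem pmm_residual_sum_bound_general
    (m1 m2 n : ℕ)
    (f : EuclideanSpace ℝ (Fin m1) → EReal) (g : EuclideanSpace ℝ (Fin m2) → EReal)
    (hf : IsPCC f) (hg : IsPCC g)
    (M : EuclideanSpace ℝ (Fin m1) →ₗ[ℝ] EuclideanSpace ℝ (Fin n))
    (C : EuclideanSpace ℝ (Fin m2) →ₗ[ℝ] EuclideanSpace ℝ (Fin n))
    (d : EuclideanSpace ℝ (Fin n))
    (lam : ℝ) (hlam : 0 < lam) (ρb : ℝ) (hρb : ρb ∈ Set.Ico (0 : ℝ) 1)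
    (u : ℕ → EuclideanSpace ℝ (Fin m1)) (v : ℕ → EuclideanSpace ℝ (Fin m2))
    (z w x y : ℕ → EuclideanSpace ℝ (Fin n)) (γ ρ : ℕ → ℝ)
    (hv : ∀ k, 1 ≤ k → ∀ v' : EuclideanSpace ℝ (Fin m2),
      g (v k) + ((⟪z (k-1) + lam • w (k-1), C (v k) - d⟫ +
          lam / 2 * ‖C (v k) - d‖ ^ 2 : ℝ) : EReal) ≤
        g v' + ((⟪z (k-1) + lam • w (k-1), C v' - d⟫ +
          lam / 2 * ‖C v' - d‖ ^ 2 : ℝ) : EReal))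
    (hu : ∀ k, 1 ≤ k → ∀ u' : EuclideanSpace ℝ (Fin m1),
      f (u k) + ((⟪z (k-1) + lam • (C (v k) - d), M (u k)⟫ +
          lam / 2 * ‖M (u k)‖ ^ 2 : ℝ) : EReal) ≤
        f u' + ((⟪z (k-1) + lam • (C (v k) - d), M u'⟫ +
          lam / 2 * ‖M u'‖ ^ 2 : ℝ) : EReal))
    (hx : ∀ k, 1 ≤ k → x k = z (k-1) + lam • w (k-1) + lam • (C (v k) - d))
    (hy : ∀ k, 1 ≤ k → y k = x k - lam • (w (k-1) - M (u k)))
    (hγ : ∀ k, 1 ≤ k → γ k = (lam * ‖C (v k) - d + w (k-1)‖ ^ 2 +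
        lam * ⟪d - C (v k) - M (u k), w (k-1) - M (u k)⟫) /
      (‖M (u k) + C (v k) - d‖ ^ 2 + lam ^ 2 * ‖M (u k) - w (k-1)‖ ^ 2))
    (hρ : ∀ k, 1 ≤ k → ρ k ∈ Set.Icc (1 - ρb) (1 + ρb))
    (hz : ∀ k, 1 ≤ k → z k = z (k-1) + (ρ k * γ k) • (M (u k) + C (v k) - d))
    (hw : ∀ k, 1 ≤ k → w k = w (k-1) - (ρ k * γ k * lam) • (w (k-1) - M (u k)))
    (hsaddle : ∃ us vs zs, IsSaddle f g M C d us vs zs)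
    (d0 : ℝ)
    (hd0 : d0 = sInf ((fun p : EuclideanSpace ℝ (Fin n) × EuclideanSpace ℝ (Fin n) =>
      Real.sqrt (‖z 0 - p.1‖ ^ 2 + ‖w 0 - p.2‖ ^ 2)) '' extSolSet f g M C d))
    (k : ℕ) :
    ∑ j ∈ Finset.Icc 1 k, ρ j * (2 - ρ j) * γ j ^ 2 *
        (‖M (u j) + C (v j) - d‖ ^ 2 + ‖x j - y j‖ ^ 2) ≤ d0 ^ 2 := by
  obtain ⟨hfbot, hftop, -, hfc⟩ := hf
  obtain ⟨hgbot, hgtop, -, hgc⟩ := hg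
  obtain ⟨us, vs, zs, hsaddle⟩ := hsaddle
  rw [hd0]
  refine le_sInf_sqrt_image_sq ⟨_, hsaddle.mk_mem_extSolSet hfbot hgbot⟩ fun p hp => ?_
  refine sum_Icc_le_of_forall_succ_add_le (D := fun j => ‖z j - p.1‖ ^ 2 + ‖w j - p.2‖ ^ 2)
    (fun j => by positivity) (fun j => ?_) k
  have hj : 1 ≤ j + 1 := Nat.le_add_left 1 j
  have hρ₀ : 0 ≤ ρ (j + 1) := by linarith [(hρ _ hj).1, hρb.2]
  rw [hz _ hj, hw _ hj]
  exact pmm_fejer_step hfc hfbot hftop hgc hgbot hgtop hlam.le hρ₀ hp (hv _ hj) (hu _ hj)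
    (hx _ hj) (hy _ hj) (hγ _ hj)

/-- summed Fejér inequality: the weighted sum of squared residuals is
bounded by the squared distance from the initial point to the extended solution set. -/
theorem pmm_residual_sum_bound
    (m1 m2 n : ℕ)
    (f : EuclideanSpace ℝ (Fin m1) → EReal) (g : EuclideanSpace ℝ (Fin m2) → EReal)
    (hf : IsPCC f) (hg : IsPCC g)
    (M : EuclideanSpace ℝ (Fin m1) →ₗ[ℝ] EuclideanSpace ℝ (Fin n))
    (C : EuclideanSpace ℝ (Fin m2) →ₗ[ℝ] EuclideanSpace ℝ (Fin n))
    (d : EuclideanSpace ℝ (Fin n))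
    (lam : ℝ) (hlam : 0 < lam) (ρb : ℝ) (hρb : ρb ∈ Set.Ico (0 : ℝ) 1)
    (u : ℕ → EuclideanSpace ℝ (Fin m1)) (v : ℕ → EuclideanSpace ℝ (Fin m2))
    (z w x y : ℕ → EuclideanSpace ℝ (Fin n)) (γ ρ : ℕ → ℝ)
    (hv : ∀ k, 1 ≤ k → ∀ v' : EuclideanSpace ℝ (Fin m2),
      g (v k) + ((⟪z (k-1) + lam • w (k-1), C (v k) - d⟫ +
          lam / 2 * ‖C (v k) - d‖ ^ 2 : ℝ) : EReal) ≤
        g v' + ((⟪z (k-1) + lam • w (k-1), C v' - d⟫ +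
          lam / 2 * ‖C v' - d‖ ^ 2 : ℝ) : EReal))
    (hu : ∀ k, 1 ≤ k → ∀ u' : EuclideanSpace ℝ (Fin m1),
      f (u k) + ((⟪z (k-1) + lam • (C (v k) - d), M (u k)⟫ +
          lam / 2 * ‖M (u k)‖ ^ 2 : ℝ) : EReal) ≤
        f u' + ((⟪z (k-1) + lam • (C (v k) - d), M u'⟫ +
          lam / 2 * ‖M u'‖ ^ 2 : ℝ) : EReal))
    (hx : ∀ k, 1 ≤ k → x k = z (k-1) + lam • w (k-1) + lam • (C (v k) - d))
    (hy : ∀ k, 1 ≤ k → y k = x k - lam • (w (k-1) - M (u k)))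
    (hnz : ∀ k, 1 ≤ k → ‖M (u k) + C (v k) - d‖ + ‖M (u k) - w (k-1)‖ ≠ 0)
    (hγ : ∀ k, 1 ≤ k → γ k = (lam * ‖C (v k) - d + w (k-1)‖ ^ 2 +
        lam * ⟪d - C (v k) - M (u k), w (k-1) - M (u k)⟫) /
      (‖M (u k) + C (v k) - d‖ ^ 2 + lam ^ 2 * ‖M (u k) - w (k-1)‖ ^ 2))
    (hρ : ∀ k, 1 ≤ k → ρ k ∈ Set.Icc (1 - ρb) (1 + ρb))
    (hz : ∀ k, 1 ≤ k → z k = z (k-1) + (ρ k * γ k) • (M (u k) + C (v k) - d))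
    (hw : ∀ k, 1 ≤ k → w k = w (k-1) - (ρ k * γ k * lam) • (w (k-1) - M (u k)))
    (hsaddle : ∃ us vs zs, IsSaddle f g M C d us vs zs)
    (d0 : ℝ)
    (hd0 : d0 = sInf ((fun p : EuclideanSpace ℝ (Fin n) × EuclideanSpace ℝ (Fin n) =>
      Real.sqrt (‖z 0 - p.1‖ ^ 2 + ‖w 0 - p.2‖ ^ 2)) '' extSolSet f g M C d))
    (k : ℕ) (hk : 1 ≤ k) :
    ∑ j ∈ Finset.Icc 1 k, ρ j * (2 - ρ j) * γ j ^ 2 *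
        (‖M (u j) + C (v j) - d‖ ^ 2 + ‖x j - y j‖ ^ 2) ≤ d0 ^ 2 :=
  pmm_residual_sum_bound_general m1 m2 n f g hf hg M C d lam hlam ρb hρb u v z w x y γ ρ hv hu hx hy
    hγ hρ hz hw hsaddle d0 hd0 k
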